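/- arXiv:2203.16226 — 3 statements merged into one kernel-verified Lean document; each statement's English description precedes it below -/
import Mathlib

section
/- Let τ be a uniform substitution over A (all images τ(a), a ∈ A, have the same length ‖τ‖) such that d_H(τ(a),τ(b)) = ‖τ‖ for all distinct letters a ≠ b ∈ A. Then τ̄ is an isometry for the Besicovitch pseudometric: 𝔡_H(τ̄(x), τ̄(y)) = 𝔡_H(x,y) for all x, y ∈ A^ℕ. -/
open Filter

/-- The finite factor `x_[i, i+n)` of the infinite word `x`. -/
def factor {A : Type*} (x : ℕ → A) (i n : ℕ) : List A := List.ofFn (fun k : Fin n => x (i + k))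

/-- The shift map `σ` on infinite words. -/
def shift {A : Type*} (x : ℕ → A) : ℕ → A := fun i => x (i + 1)
/-- The Hamming distance between two finite words (number of mismatching positions). -/
def hammingL {A : Type*} [DecidableEq A] (u v : List A) : ℕ :=
  ((List.range (max u.length v.length)).filter (fun i => u[i]? ≠ v[i]?)).length

/-- The Besicovitch pseudometric `𝔡_H`. -/
noncomputable def besic {A : Type*} [DecidableEq A] (x y : ℕ → A) : ℝ :=
  limsup (fun l : ℕ => (hammingL (factor x 0 l) (factor y 0 l) : ℝ) / l) atTop

/-!
Uniformity means that `τ̄(x)` at position `i` is the letter `i % L` of `τ (x (i / L))`, and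
markedness then means that `τ̄(x)` and `τ̄(y)` differ at `i` exactly when `x` and `y` differ at
`i / L`. So `τ̄` has the mismatch pattern of the `L`-fold stretching `i ↦ x (i / L)`, whose number
of mismatches below `l` lies within `L` of `L` times that of `x, y` below `l / L`. The two
mismatch densities thus differ by at most `1 / (l / L)`, which does not change the limsup.
-/

open Finset Topology

def stretch {A : Type*} (L : ℕ) (x : ℕ → A) : ℕ → A := fun i => x (i / L)

section Mismatches

variable {A : Type*} [DecidableEq A]

def mismatches (x y : ℕ → A) (n : ℕ) : ℕ := #{i ∈ range n | x i ≠ y i}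

theorem hammingL_factor_zero (x y : ℕ → A) (n : ℕ) :
    hammingL (factor x 0 n) (factor y 0 n) = mismatches x y n := by
  simp only [hammingL, factor, mismatches, List.length_ofFn, max_self]
  show _ = (List.filter _ (List.range n)).length
  congr 1
  refine List.filter_congr fun i hi => ?_
  simp [List.mem_range.mp hi]

theorem mismatches_le (x y : ℕ → A) (n : ℕ) : mismatches x y n ≤ n :=
  (card_filter_le _ _).trans (card_range n).le

theorem mismatches_mono (x y : ℕ → A) : Monotone (mismatches x y) :=
  fun _ _ h => card_le_card (filter_subset_filter _ (range_subset_range.mpr h))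

theorem mismatches_succ_le (x y : ℕ → A) (n : ℕ) :
    mismatches x y (n + 1) ≤ mismatches x y n + 1 := by
  simp only [mismatches, range_add_one, filter_insert]
  split_ifs
  · exact card_insert_le _ _
  · exact Nat.le_succ _

theorem mismatches_congr {x y x' y' : ℕ → A} (h : ∀ i, x i ≠ y i ↔ x' i ≠ y' i) :
    mismatches x y = mismatches x' y' :=
  funext fun _ => congrArg card (filter_congr fun i _ => h i)

theorem mismatches_stretch_mul (L : ℕ) (x y : ℕ → A) (m : ℕ) :
    mismatches (stretch L x) (stretch L y) (m * L) = L * mismatches x y m := by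
  simp only [mismatches, card_filter]
  induction m with
  | zero => simp
  | succ m ih =>
    have hblock : ∀ k < L, (m * L + k) / L = m := fun k hk => by
      rw [Nat.mul_comm, Nat.mul_add_div (by omega), Nat.div_eq_of_lt hk, Nat.add_zero]
    rw [Nat.add_one_mul, sum_range_add, ih, sum_range_succ, Nat.mul_add]
    congr 1
    rw [sum_congr rfl fun k hk => by rw [stretch, stretch, hblock k (mem_range.mp hk)]]
    simp

theorem mul_mismatches_div_le_mismatches_stretch {L : ℕ} (x y : ℕ → A) (l : ℕ) :
    L * mismatches x y (l / L) ≤ mismatches (stretch L x) (stretch L y) l := by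
  rw [← mismatches_stretch_mul]
  exact mismatches_mono _ _ (Nat.div_mul_le_self l L)

theorem mismatches_stretch_le {L : ℕ} (hL : 0 < L) (x y : ℕ → A) (l : ℕ) :
    mismatches (stretch L x) (stretch L y) l ≤ L * mismatches x y (l / L) + L :=
  calc mismatches (stretch L x) (stretch L y) l
      ≤ mismatches (stretch L x) (stretch L y) ((l / L + 1) * L) :=
        mismatches_mono _ _ (by rw [Nat.add_one_mul]; exact (Nat.lt_div_mul_add hL).le)
    _ = L * mismatches x y (l / L + 1) := mismatches_stretch_mul L x y _
    _ ≤ L * mismatches x y (l / L) + L := by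
        rw [← Nat.mul_add_one]; exact Nat.mul_le_mul_left L (mismatches_succ_le x y _)

end Mismatches

theorem Filter.limsup_eq_limsup_of_tendsto_sub_nhds_zero {ι : Type*} {f : Filter ι} [f.NeBot]
    {u v : ι → ℝ} (hu : IsBoundedUnder (· ≤ ·) f u) (hu' : IsBoundedUnder (· ≥ ·) f u)
    (hv : IsBoundedUnder (· ≤ ·) f v) (hv' : IsBoundedUnder (· ≥ ·) f v)
    (h : Tendsto (u - v) f (𝓝 0)) : limsup u f = limsup v f := by
  have h' : Tendsto (v - u) f (𝓝 0) := by
    rw [← neg_sub, ← neg_zero]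
    exact h.neg
  apply le_antisymm
  · calc limsup u f = limsup (v + (u - v)) f := by rw [add_sub_cancel]
      _ ≤ limsup v f + limsup (u - v) f :=
        limsup_add_le hv' hv h.isBoundedUnder_ge.isCoboundedUnder_le h.isBoundedUnder_le
      _ = limsup v f := by rw [h.limsup_eq, add_zero]
  · calc limsup v f = limsup (u + (v - u)) f := by rw [add_sub_cancel]
      _ ≤ limsup u f + limsup (v - u) f :=
        limsup_add_le hu' hu h'.isBoundedUnder_ge.isCoboundedUnder_le h'.isBoundedUnder_le
      _ = limsup u f := by rw [h'.limsup_eq, add_zero]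

section Density

variable {A : Type*} [DecidableEq A]

noncomputable def density (x y : ℕ → A) (l : ℕ) : ℝ := mismatches x y l / l

theorem besic_eq_limsup_density (x y : ℕ → A) : besic x y = limsup (density x y) atTop := by
  simp only [besic, hammingL_factor_zero]
  rfl

theorem density_nonneg (x y : ℕ → A) (l : ℕ) : 0 ≤ density x y l := by
  unfold density; positivity

theorem density_le_one (x y : ℕ → A) (l : ℕ) : density x y l ≤ 1 :=
  div_le_one_of_le₀ (by exact_mod_cast mismatches_le x y l) l.cast_nonneg

theorem abs_density_stretch_sub_le {L : ℕ} (hL : 0 < L) (x y : ℕ → A) {l : ℕ} (hl : L ≤ l) :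
    |density (stretch L x) (stretch L y) l - density x y (l / L)| ≤ 1 / (l / L : ℕ) := by
  set q := l / L
  have hq : 0 < (q : ℝ) := by exact_mod_cast Nat.div_pos hl hL
  have hl0 : 0 < (l : ℝ) := by exact_mod_cast hL.trans_le hl
  have hlo : (q : ℝ) * L ≤ l := by exact_mod_cast Nat.div_mul_le_self l L
  have hhi : (l : ℝ) ≤ (q + 1) * L := by
    exact_mod_cast (Nat.add_one_mul q L ▸ Nat.lt_div_mul_add hL).le
  have hc : (mismatches x y q : ℝ) ≤ q := by exact_mod_cast mismatches_le x y q
  have hc'lo : (L : ℝ) * mismatches x y q ≤ mismatches (stretch L x) (stretch L y) l := by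
    exact_mod_cast mul_mismatches_div_le_mismatches_stretch x y l
  have hc'hi : (mismatches (stretch L x) (stretch L y) l : ℝ) ≤ L * mismatches x y q + L := by
    exact_mod_cast mismatches_stretch_le hL x y l
  unfold density
  rw [abs_sub_le_iff]
  constructor
  · rw [sub_le_iff_le_add, ← add_div, div_le_div_iff₀ hl0 hq]
    nlinarith
  · rw [sub_le_comm, ← sub_div, div_le_div_iff₀ hq hl0]
    nlinarith [(mismatches x y q).cast_nonneg (α := ℝ)]

end Density

section Besicovitch

variable {A : Type*} [DecidableEq A]

theorem besic_congr {x y x' y' : ℕ → A} (h : ∀ i, x i ≠ y i ↔ x' i ≠ y' i) :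
    besic x y = besic x' y' := by
  simp only [besic, hammingL_factor_zero, mismatches_congr h]

theorem besic_stretch {L : ℕ} (hL : 0 < L) (x y : ℕ → A) :
    besic (stretch L x) (stretch L y) = besic x y := by
  have hbdd : ∀ u : ℕ → ℝ, (∀ l, 0 ≤ u l ∧ u l ≤ 1) →
      IsBoundedUnder (· ≤ ·) atTop u ∧ IsBoundedUnder (· ≥ ·) atTop u := fun u hu =>
    ⟨isBoundedUnder_of ⟨1, fun l => (hu l).2⟩, isBoundedUnder_of ⟨0, fun l => (hu l).1⟩⟩
  obtain ⟨hs, hs'⟩ := hbdd (density (stretch L x) (stretch L y)) fun l =>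
    ⟨density_nonneg _ _ l, density_le_one _ _ l⟩
  obtain ⟨hd, hd'⟩ := hbdd (density x y ∘ (· / L)) fun l =>
    ⟨density_nonneg _ _ _, density_le_one _ _ _⟩
  have hsub : Tendsto (density (stretch L x) (stretch L y) - density x y ∘ (· / L)) atTop (𝓝 0) :=
    squeeze_zero_norm' ((eventually_ge_atTop L).mono fun l hl =>
      (Real.norm_eq_abs _).trans_le (abs_density_stretch_sub_le hL x y hl))
      (tendsto_one_div_atTop_nhds_zero_nat.comp (map_div_atTop_eq_nat L hL).le)
  rw [besic_eq_limsup_density, besic_eq_limsup_density,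
    limsup_eq_limsup_of_tendsto_sub_nhds_zero hs hs' hd hd' hsub]
  exact (limsup_comp _ _ _).trans (congrArg _ (map_div_atTop_eq_nat L hL))

end Besicovitch

theorem some_apply_eq_getElem?_of_uniform {A : Type*} (τ : A → List A) {L : ℕ} (hL : 0 < L)
    (hunif : ∀ a, (τ a).length = L) {G : (ℕ → A) → ℕ → A}
    (hG : ∀ (z : ℕ → A) (n k : ℕ) (h : k < (τ (z n)).length),
      G z (n * L + k) = (τ (z n)).get ⟨k, h⟩)
    (z : ℕ → A) (i : ℕ) : some (G z i) = (τ (z (i / L)))[i % L]? := by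
  conv_lhs => rw [← Nat.div_add_mod' i L]
  rw [hG z _ _ (by rw [hunif]; exact Nat.mod_lt i hL)]
  simp

section Substitution

variable {A : Type*} [DecidableEq A]

theorem getElem?_ne_of_hammingL_eq_length {u v : List A} (hv : v.length = u.length)
    (h : hammingL u v = u.length) {k : ℕ} (hk : k < u.length) : u[k]? ≠ v[k]? := by
  rw [hammingL, hv, max_self] at h
  have hall := List.length_filter_eq_length_iff.mp (h.trans List.length_range.symm)
  simpa using hall k (List.mem_range.mpr hk)

theorem apply_ne_apply_iff_of_marked (τ : A → List A) {L : ℕ} (hL : 0 < L)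
    (hunif : ∀ a, (τ a).length = L) (hmark : ∀ a b : A, a ≠ b → hammingL (τ a) (τ b) = L)
    {G : (ℕ → A) → ℕ → A}
    (hG : ∀ (z : ℕ → A) (n k : ℕ) (h : k < (τ (z n)).length),
      G z (n * L + k) = (τ (z n)).get ⟨k, h⟩)
    (x y : ℕ → A) (i : ℕ) : G x i ≠ G y i ↔ stretch L x i ≠ stretch L y i := by
  have hτ := some_apply_eq_getElem?_of_uniform τ hL hunif hG
  refine ⟨fun hne heq => hne (Option.some_injective _ ?_), fun hne heq => ?_⟩
  · rw [hτ, hτ]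
    exact congrArg (fun a => (τ a)[i % L]?) heq
  · refine getElem?_ne_of_hammingL_eq_length (by rw [hunif, hunif])
      ((hmark _ _ hne).trans (hunif _).symm) (by rw [hunif]; exact Nat.mod_lt i hL) ?_
    show (τ (x (i / L)))[i % L]? = (τ (y (i / L)))[i % L]?
    rw [← hτ, ← hτ, heq]

end Substitution

theorem marked_uniform_substitution_isometry_general {A : Type*} [DecidableEq A]
    (τ : A → List A) (L : ℕ) (hL : 1 ≤ L)
    (hunif : ∀ a, (τ a).length = L)
    (hmark : ∀ a b : A, a ≠ b → hammingL (τ a) (τ b) = L)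
    (G : (ℕ → A) → ℕ → A)
    (hG : ∀ (z : ℕ → A) (n k : ℕ) (h : k < (τ (z n)).length),
      G z (n * L + k) = (τ (z n)).get ⟨k, h⟩)
    (x y : ℕ → A) :
    besic (G x) (G y) = besic x y := by
  rw [besic_congr (apply_ne_apply_iff_of_marked τ hL hunif hmark hG x y), besic_stretch hL]

/-- Let `τ` be a uniform substitution with common image length `L` such that
`d_H(τ(a), τ(b)) = L` for all distinct letters `a ≠ b`. Then the induced map `τ̄` (here `G`,
characterized by `G(z) = τ(z_0)τ(z_1)τ(z_2)⋯`) is an isometry for the Besicovitch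
pseudometric. -/
theorem marked_uniform_substitution_isometry {A : Type*} [Fintype A] [DecidableEq A]
    (τ : A → List A) (L : ℕ) (hL : 1 ≤ L)
    (hunif : ∀ a, (τ a).length = L)
    (hmark : ∀ a b : A, a ≠ b → hammingL (τ a) (τ b) = L)
    (G : (ℕ → A) → ℕ → A)
    (hG : ∀ (z : ℕ → A) (n k : ℕ) (h : k < (τ (z n)).length),
      G z (n * L + k) = (τ (z n)).get ⟨k, h⟩)
    (x y : ℕ → A) :
    besic (G x) (G y) = besic x y :=
  marked_uniform_substitution_isometry_general τ L hL hunif hmark G hG x y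
end

section
/- Let F be a uniform dill map with local rule f and common image length L = |f|, and let m ∈ ℕ. Then for every n ∈ ℕ, (σ^m ∘ F)^n = σ^{m·Σ_{k=0}^{n−1} L^k} ∘ F^n. Consequently, for all x, y ∈ A^ℕ and n ∈ ℕ, 𝔡_H((σ^m∘F)^n(x), (σ^m∘F)^n(y)) = 𝔡_H(F^n(x), F^n(y)). -/
/-!
Uniformity places the block `f(x_[n,n+s))` at position `n·L` of `F(x)`, so `F` semiconjugates
`σ` to `σ^L`: `F ∘ σ = σ^L ∘ F`. Moving the shifts of `(σ^m ∘ F)^n` to the left through the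
copies of `F` multiplies them by powers of `L`, which gives the first identity. The second
follows because `𝔡_H` is shift-invariant: shifting both words by `j` changes the number of
mismatches in a prefix of length `ℓ` by at most `j`, and `j / ℓ → 0`.
-/

open Filter

/-- The window `x_[i, i+s)` of the infinite word `x`, as an element of `A^s`. -/
def window {A : Type*} (x : ℕ → A) (i : ℕ) (s : ℕ) : Fin s → A := fun k => x (i + k)

/-- The cocycle `S_n(x) = ∑_{j<n} |f(x_[j,j+s))|` of a local rule `f`. -/
def cocycle {A : Type*} {s : ℕ} (f : (Fin s → A) → List A) (x : ℕ → A) (n : ℕ) : ℕ :=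
  ∑ j ∈ Finset.range n, (f (window x j s)).length

/-- `F` is the dill map with local rule `f`: for every `x`, `F x` is the infinite
concatenation `f(x_[0,s)) f(x_[1,1+s)) f(x_[2,2+s)) ⋯`. -/
def IsDillVia {A : Type*} {s : ℕ} (f : (Fin s → A) → List A) (F : (ℕ → A) → ℕ → A) : Prop :=
  ∀ (x : ℕ → A) (n k : ℕ) (h : k < (f (window x n s)).length),
    F x (cocycle f x n + k) = (f (window x n s)).get ⟨k, h⟩

open Topology Function

lemma shift_iterate_apply {A : Type*} (x : ℕ → A) (m i : ℕ) : shift^[m] x i = x (i + m) := by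
  induction m generalizing x with
  | zero => rfl
  | succ m ih => rw [iterate_succ_apply, ih]; rfl

lemma Function.Semiconj.iterate_iterate_comp_eq {α : Type*} {G T : α → α} {L : ℕ}
    (h : Semiconj G T T^[L]) (m n : ℕ) :
    (T^[m] ∘ G)^[n] = T^[m * ∑ k ∈ Finset.range n, L ^ k] ∘ G^[n] := by
  induction n with
  | zero => simp
  | succ n ih =>
    have hG : G ∘ T^[m * ∑ k ∈ Finset.range n, L ^ k] =
        T^[m * (L * ∑ k ∈ Finset.range n, L ^ k)] ∘ G := by
      rw [mul_left_comm, iterate_mul T L]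
      exact (h.iterate_right _).comp_eq
    rw [iterate_succ', ih, iterate_succ' G, geom_sum_succ, mul_add, mul_one, add_comm,
      iterate_add, comp_assoc, ← comp_assoc G, hG]
    rfl

section Besicovitch

variable {A : Type*} [DecidableEq A]

def mismatchCount (x y : ℕ → A) (l : ℕ) : ℕ :=
  (List.range l).countP (fun i => x i ≠ y i)

lemma hammingL_factor_eq_mismatchCount (x y : ℕ → A) (l : ℕ) :
    hammingL (factor x 0 l) (factor y 0 l) = mismatchCount x y l := by
  unfold hammingL mismatchCount factor
  rw [← List.countP_eq_length_filter, List.length_ofFn, List.length_ofFn, max_self]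
  refine List.countP_congr fun i hi => ?_
  simp [List.mem_range.mp hi]

lemma mismatchCount_le (x y : ℕ → A) (l : ℕ) : mismatchCount x y l ≤ l := by
  unfold mismatchCount
  simpa using List.countP_le_length (p := fun i => decide (x i ≠ y i)) (l := List.range l)

lemma mismatchCount_add (x y : ℕ → A) (a b : ℕ) :
    mismatchCount x y (a + b) =
      mismatchCount x y a + mismatchCount (shift^[a] x) (shift^[a] y) b := by
  unfold mismatchCount
  rw [List.range_add, List.countP_append, List.countP_map]
  congr 1
  refine List.countP_congr fun i _ => ?_
  simp [shift_iterate_apply, Nat.add_comm a i]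

lemma abs_mismatchCount_shift_iterate_sub_le (x y : ℕ → A) (j l : ℕ) :
    |(mismatchCount (shift^[j] x) (shift^[j] y) l : ℝ) - mismatchCount x y l| ≤ j := by
  have e₁ := mismatchCount_add x y j l
  have e₂ := mismatchCount_add x y l j
  have h₁ := mismatchCount_le x y j
  have h₂ := mismatchCount_le (shift^[l] x) (shift^[l] y) j
  rw [Nat.add_comm j l] at e₁
  refine abs_sub_le_iff.2 ⟨?_, ?_⟩ <;>
    exact sub_left_le_of_le_add (by exact_mod_cast (show _ ≤ _ + j by omega))

lemma limsup_add_of_tendsto_zero {ι : Type*} {l : Filter ι} [l.NeBot] {u v : ι → ℝ}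
    (hu₀ : IsBoundedUnder (· ≥ ·) l u) (hu₁ : IsBoundedUnder (· ≤ ·) l u)
    (hv : Tendsto v l (𝓝 0)) :
    limsup (u + v) l = limsup u l := by
  apply le_antisymm
  · calc limsup (u + v) l ≤ limsup u l + limsup v l :=
          limsup_add_le hu₀ hu₁ hv.isCoboundedUnder_le hv.isBoundedUnder_le
      _ = limsup u l := by rw [hv.limsup_eq, add_zero]
  · calc limsup u l = limsup u l + liminf v l := by rw [hv.liminf_eq, add_zero]
      _ ≤ limsup (u + v) l :=
          le_limsup_add hu₁ hu₀.isCoboundedUnder_le hv.isBoundedUnder_le hv.isBoundedUnder_ge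

lemma besic_shift_iterate (j : ℕ) (x y : ℕ → A) :
    besic (shift^[j] x) (shift^[j] y) = besic x y := by
  set u : ℕ → ℝ := fun l => (mismatchCount x y l : ℝ) / l
  set v : ℕ → ℝ := fun l =>
    (mismatchCount (shift^[j] x) (shift^[j] y) l : ℝ) / l - u l
  have hv : Tendsto v atTop (𝓝 0) := by
    refine squeeze_zero_norm (fun l => ?_) (tendsto_const_div_atTop_nhds_zero_nat (j : ℝ))
    dsimp only [v, u]
    rw [Real.norm_eq_abs, ← sub_div, abs_div, Nat.abs_cast]
    exact div_le_div_of_nonneg_right (abs_mismatchCount_shift_iterate_sub_le x y j l)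
      (Nat.cast_nonneg l)
  have hu_le_one : ∀ l, u l ≤ 1 := fun l =>
    div_le_one_of_le₀ (by exact_mod_cast mismatchCount_le x y l) (Nat.cast_nonneg l)
  unfold besic
  simp only [hammingL_factor_eq_mismatchCount]
  convert limsup_add_of_tendsto_zero (isBoundedUnder_of ⟨0, fun l => by positivity⟩)
    (isBoundedUnder_of ⟨1, hu_le_one⟩) hv using 2
  ext l
  exact (add_sub_cancel (u l) _).symm

end Besicovitch

lemma window_shift {A : Type*} (x : ℕ → A) (n s : ℕ) :
    window (shift x) n s = window x (n + 1) s := by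
  funext k
  simp only [window, shift]
  congr 1
  omega

namespace IsDillVia

variable {A : Type*} {s L : ℕ} {f : (Fin s → A) → List A} {F : (ℕ → A) → ℕ → A}

lemma apply_mul_add (hF : IsDillVia f F) (hunif : ∀ u, (f u).length = L)
    (x : ℕ → A) (n k : ℕ) (hk : k < L) :
    F x (n * L + k) = (f (window x n s))[k]'(by rw [hunif]; exact hk) := by
  have hcocycle : cocycle f x n = n * L := by simp [cocycle, hunif, mul_comm]
  simpa [hcocycle] using hF x n k (by rw [hunif]; exact hk)

lemma semiconj_shift (hF : IsDillVia f F) (hunif : ∀ u, (f u).length = L) (hL : 1 ≤ L) :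
    Semiconj F shift shift^[L] := by
  intro x
  funext p
  obtain ⟨n, k, hk, rfl⟩ : ∃ n k, k < L ∧ p = n * L + k :=
    ⟨p / L, p % L, Nat.mod_lt _ hL, (Nat.div_add_mod' p L).symm⟩
  rw [shift_iterate_apply, hF.apply_mul_add hunif _ n k hk,
    show n * L + k + L = (n + 1) * L + k by ring, hF.apply_mul_add hunif _ (n + 1) k hk,
    window_shift]

end IsDillVia

theorem uniform_dill_shift_compose_general {A : Type*} [DecidableEq A]
    (s L : ℕ) (hL : 1 ≤ L)
    (f : (Fin s → A) → List A) (hunif : ∀ u, (f u).length = L)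
    (F : (ℕ → A) → ℕ → A) (hF : IsDillVia f F) (m : ℕ) :
    (∀ n : ℕ, (shift^[m] ∘ F)^[n] = shift^[m * ∑ k ∈ Finset.range n, L ^ k] ∘ F^[n]) ∧
      (∀ (x y : ℕ → A) (n : ℕ),
        besic ((shift^[m] ∘ F)^[n] x) ((shift^[m] ∘ F)^[n] y) =
          besic (F^[n] x) (F^[n] y)) := by
  have hcomp := (hF.semiconj_shift hunif hL).iterate_iterate_comp_eq m
  refine ⟨hcomp, fun x y n => ?_⟩
  rw [hcomp n, comp_apply, comp_apply, besic_shift_iterate]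

/-- For a uniform dill map `F` with common image length `L` and `m ∈ ℕ`:
`(σ^m ∘ F)^n = σ^{m·∑_{k<n} L^k} ∘ F^n`, and consequently
`𝔡_H((σ^m∘F)^n(x), (σ^m∘F)^n(y)) = 𝔡_H(F^n(x), F^n(y))` for all `x, y, n`. -/
theorem uniform_dill_shift_compose {A : Type*} [DecidableEq A]
    (s L : ℕ) (hs : 1 ≤ s) (hL : 1 ≤ L)
    (f : (Fin s → A) → List A) (hunif : ∀ u, (f u).length = L)
    (F : (ℕ → A) → ℕ → A) (hF : IsDillVia f F) (m : ℕ) :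
    (∀ n : ℕ, (shift^[m] ∘ F)^[n] = shift^[m * ∑ k ∈ Finset.range n, L ^ k] ∘ F^[n]) ∧
      (∀ (x y : ℕ → A) (n : ℕ),
        besic ((shift^[m] ∘ F)^[n] x) ((shift^[m] ∘ F)^[n] y) =
          besic (F^[n] x) (F^[n] y)) :=
  uniform_dill_shift_compose_general s L hL f hunif F hF m
end

section
/- Every dill map F with diameter s and local rule f is (2s−1)·(‖f‖_max/‖f‖_min)-Lipschitz with respect to the Feldman pseudometric: for all x, y ∈ A^ℕ, 𝔡_L(F(x), F(y)) ≤ (2s−1)·(‖f‖_max/‖f‖_min)·𝔡_L(x,y). In particular, every substitution τ satisfies 𝔡_L(τ̄(x), τ̄(y)) ≤ (‖τ‖_max/‖τ‖_min)·𝔡_L(x,y) for all x, y ∈ A^ℕ. -/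
open Filter

/-- The maximal length of a common (not necessarily contiguous) subsequence of `u` and `v`. -/
noncomputable def lcs {A : Type*} (u v : List A) : ℕ :=
  sSup {n | ∃ w : List A, w.length = n ∧ w.Sublist u ∧ w.Sublist v}

/-- The (halved) Levenshtein distance `d_L(u,v) = (|u|+|v|)/2 - ℓ(u,v)`. -/
noncomputable def levD {A : Type*} (u v : List A) : ℝ :=
  ((u.length : ℝ) + v.length) / 2 - lcs u v

/-- The Feldman pseudometric `𝔡_L`. -/
noncomputable def feld {A : Type*} (x y : ℕ → A) : ℝ :=
  limsup (fun l : ℕ => levD (factor x 0 l) (factor y 0 l) / l) atTop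
/-- The lower norm `‖f‖_min = min_{u ∈ A^s} |f(u)|` of a local rule. -/
noncomputable def normMin {A : Type*} {s : ℕ} (f : (Fin s → A) → List A) : ℕ :=
  sInf {n | ∃ u : Fin s → A, (f u).length = n}

/-- The upper norm `‖f‖_max = max_{u ∈ A^s} |f(u)|` of a local rule. -/
noncomputable def normMax {A : Type*} {s : ℕ} (f : (Fin s → A) → List A) : ℕ :=
  sSup {n | ∃ u : Fin s → A, (f u).length = n}

/-- The substitution cocycle `∑_{j<n} |τ(z_j)|`. -/
def subCocycle {A : Type*} (τ : A → List A) (z : ℕ → A) (n : ℕ) : ℕ :=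
  ∑ j ∈ Finset.range n, (τ (z j)).length

/-!
Let `m` be the smaller of the numbers of complete blocks `f(x_[j, j+s))`, `f(y_[j, j+s))` inside
the prefixes of length `L` of `F x` and `F y`, so that `‖f‖_min m ≤ L ≤ ‖f‖_max (m + 1)`. Embed a
longest common subsequence of `x_[0,m)` and `y_[0,m)`, of length `ℓ`, into both words. Each of the
at most `m - ℓ` gaps of either embedding spoils at most `s - 1` of the `ℓ + 1 - s` windows of `s`
consecutive letters of the subsequence, and every unspoilt window yields a block `f(u)` common to
`F x` and `F y`. Hence `d_L((F x)_[0,L), (F y)_[0,L)) ≤ ‖f‖_max (s + (2s - 1)(m - ℓ))`; dividing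
by `L ≥ ‖f‖_min m` and letting `L → ∞` gives the bound. A substitution is the dill map of
diameter `1` with local rule `u ↦ τ (u 0)`.
-/

open scoped List

section Words

variable {A : Type*}

@[simp] lemma length_factor (x : ℕ → A) (i n : ℕ) : (factor x i n).length = n := by
  simp [factor]

lemma factor_add (x : ℕ → A) (i m n : ℕ) :
    factor x i (m + n) = factor x i m ++ factor x (i + m) n := by
  simp [factor, List.ofFn_add, add_assoc]

lemma factor_sublist_factor {x : ℕ → A} {m n : ℕ} (h : m ≤ n) : factor x 0 m <+ factor x 0 n := by
  obtain ⟨k, rfl⟩ := Nat.exists_eq_add_of_le h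
  rw [factor_add]
  exact List.sublist_append_left _ _

lemma bddAbove_lcs_set (u v : List A) :
    BddAbove {n | ∃ w : List A, w.length = n ∧ w <+ u ∧ w <+ v} :=
  ⟨u.length, fun _ ⟨_, hw, hu, _⟩ => hw ▸ hu.length_le⟩

lemma length_le_lcs {u v w : List A} (hu : w <+ u) (hv : w <+ v) : w.length ≤ lcs u v :=
  le_csSup (bddAbove_lcs_set u v) ⟨w, rfl, hu, hv⟩

lemma exists_lcs (u v : List A) : ∃ w : List A, w.length = lcs u v ∧ w <+ u ∧ w <+ v :=
  Nat.sSup_mem (s := {n | ∃ w : List A, w.length = n ∧ w <+ u ∧ w <+ v})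
    ⟨0, [], rfl, List.nil_sublist u, List.nil_sublist v⟩ (bddAbove_lcs_set u v)

lemma lcs_le_length_left (u v : List A) : lcs u v ≤ u.length := by
  obtain ⟨w, hw, hu, -⟩ := exists_lcs u v
  exact hw ▸ hu.length_le

lemma lcs_comm (u v : List A) : lcs u v = lcs v u := by
  simp only [lcs]
  congr 1
  ext n
  exact exists_congr fun w => by tauto

lemma levD_comm (u v : List A) : levD u v = levD v u := by
  rw [levD, levD, lcs_comm, add_comm (u.length : ℝ)]

lemma levD_factor (x y : ℕ → A) (n : ℕ) :
    levD (factor x 0 n) (factor y 0 n) = n - lcs (factor x 0 n) (factor y 0 n) := by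
  rw [levD, length_factor, length_factor]
  ring

lemma lcs_factor_le (x y : ℕ → A) (n : ℕ) : lcs (factor x 0 n) (factor y 0 n) ≤ n := by
  simpa using lcs_le_length_left (factor x 0 n) (factor y 0 n)

lemma levD_factor_nonneg (x y : ℕ → A) (n : ℕ) : 0 ≤ levD (factor x 0 n) (factor y 0 n) := by
  rw [levD_factor, sub_nonneg]
  exact_mod_cast lcs_factor_le x y n

lemma levD_factor_div_le_one (x y : ℕ → A) (n : ℕ) :
    levD (factor x 0 n) (factor y 0 n) / n ≤ 1 := by
  refine div_le_one_of_le₀ ?_ n.cast_nonneg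
  rw [levD_factor, sub_le_self_iff]
  exact Nat.cast_nonneg _

lemma exists_orderEmbedding_of_sublist_factor {x : ℕ → A} {m : ℕ} {w : List A}
    (hw : w <+ factor x 0 m) :
    ∃ a : ℕ ↪o ℕ, ∀ i (hi : i < w.length), a i < m ∧ x (a i) = w[i] := by
  obtain ⟨a, ha⟩ := List.sublist_iff_exists_orderEmbedding_getElem?_eq.1 hw
  refine ⟨a, fun i hi => ?_⟩
  have hai := ha i
  rw [List.getElem?_eq_getElem hi, eq_comm, List.getElem?_eq_some_iff] at hai
  obtain ⟨ham, hxa⟩ := hai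
  rw [length_factor] at ham
  exact ⟨ham, by simpa [factor] using hxa⟩

lemma exists_orderEmbedding_lcs_factor (x y : ℕ → A) (m : ℕ) :
    ∃ a b : ℕ ↪o ℕ, ∀ i < lcs (factor x 0 m) (factor y 0 m),
      a i < m ∧ b i < m ∧ x (a i) = y (b i) := by
  obtain ⟨w, hw, hwx, hwy⟩ := exists_lcs (factor x 0 m) (factor y 0 m)
  obtain ⟨a, ha⟩ := exists_orderEmbedding_of_sublist_factor hwx
  obtain ⟨b, hb⟩ := exists_orderEmbedding_of_sublist_factor hwy
  refine ⟨a, b, fun i hi => ?_⟩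
  rw [← hw] at hi
  obtain ⟨ham, hxa⟩ := ha i hi
  obtain ⟨hbm, hyb⟩ := hb i hi
  exact ⟨ham, hbm, hxa.trans hyb.symm⟩

end Words

section Runs

open Finset

def IsRun (a : ℕ → ℕ) (t s : ℕ) : Prop := ∀ r < s, a (t + r) = a t + r

instance (a : ℕ → ℕ) (t s : ℕ) : Decidable (IsRun a t s) :=
  inferInstanceAs (Decidable (∀ r < s, _))

variable {a : ℕ → ℕ}

lemma exists_jump_of_ne (ha : StrictMono a) {t r : ℕ} (h : a (t + r) ≠ a t + r) :
    ∃ u, t ≤ u ∧ u < t + r ∧ a u + 1 < a (u + 1) := by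
  induction r with
  | zero => simp at h
  | succ r ih =>
    by_cases hr : a (t + r) = a t + r
    · rw [← add_assoc] at h
      have hlt : a (t + r) < a (t + r + 1) := ha (by omega)
      exact ⟨t + r, by omega, by omega, by omega⟩
    · obtain ⟨u, htu, hur, hu⟩ := ih hr
      exact ⟨u, htu, by omega, hu⟩

lemma add_card_jumps_le (ha : StrictMono a) (n : ℕ) :
    a 0 + n + #{u ∈ range n | a u + 1 < a (u + 1)} ≤ a n := by
  induction n with
  | zero => simp
  | succ n ih =>
    have hlt : a n < a (n + 1) := ha (Nat.lt_succ_self n)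
    rw [range_add_one, filter_insert]
    split_ifs with hjump
    · rw [card_insert_of_notMem (by simp)]
      omega
    · omega

lemma card_jumps_le (ha : StrictMono a) {ℓ m : ℕ} (hm : ∀ i < ℓ, a i < m) :
    #{u ∈ range (ℓ - 1) | a u + 1 < a (u + 1)} ≤ m - ℓ := by
  rcases Nat.eq_zero_or_pos ℓ with rfl | hℓ
  · simp
  have := add_card_jumps_le ha (ℓ - 1)
  have := hm (ℓ - 1) (by omega)
  omega

lemma card_not_isRun_le (ha : StrictMono a) {ℓ m : ℕ} (s : ℕ) (hm : ∀ i < ℓ, a i < m) :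
    #{t ∈ range (ℓ + 1 - s) | ¬IsRun a t s} ≤ (s - 1) * (m - ℓ) := by
  set jumps := {u ∈ range (ℓ - 1) | a u + 1 < a (u + 1)}
  have hsub : {t ∈ range (ℓ + 1 - s) | ¬IsRun a t s} ⊆
      jumps.biUnion fun u => Icc (u + 2 - s) u := by
    intro t ht
    simp only [IsRun, not_forall, mem_filter, mem_range] at ht
    obtain ⟨htℓ, r, hrs, hr⟩ := ht
    obtain ⟨u, htu, hur, hu⟩ := exists_jump_of_ne ha hr
    exact mem_biUnion.2 ⟨u, mem_filter.2 ⟨mem_range.2 (by omega), hu⟩, mem_Icc.2 ⟨by omega, htu⟩⟩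
  calc #{t ∈ range (ℓ + 1 - s) | ¬IsRun a t s}
      ≤ #(jumps.biUnion fun u => Icc (u + 2 - s) u) := card_le_card hsub
    _ ≤ ∑ u ∈ jumps, #(Icc (u + 2 - s) u) := card_biUnion_le
    _ ≤ ∑ _u ∈ jumps, (s - 1) := sum_le_sum fun u _ => by rw [Nat.card_Icc]; omega
    _ = #jumps * (s - 1) := by rw [sum_const, smul_eq_mul]
    _ ≤ (s - 1) * (m - ℓ) := by rw [mul_comm]; exact Nat.mul_le_mul_left _ (card_jumps_le ha hm)

lemma le_card_filter_isRun_and_add {b : ℕ → ℕ} (ha : StrictMono a) (hb : StrictMono b)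
    {ℓ m : ℕ} (s : ℕ) (ham : ∀ i < ℓ, a i < m) (hbm : ∀ i < ℓ, b i < m) :
    ℓ + 1 - s ≤ #{t ∈ range (ℓ + 1 - s) | IsRun a t s ∧ IsRun b t s} + 2 * ((s - 1) * (m - ℓ)) := by
  have hbad : {t ∈ range (ℓ + 1 - s) | ¬(IsRun a t s ∧ IsRun b t s)} ⊆
      {t ∈ range (ℓ + 1 - s) | ¬IsRun a t s} ∪ {t ∈ range (ℓ + 1 - s) | ¬IsRun b t s} := by
    intro t
    simp only [mem_filter, mem_union, not_and_or]
    tauto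
  have hsplit := card_filter_add_card_filter_not (s := range (ℓ + 1 - s))
    (fun t => IsRun a t s ∧ IsRun b t s)
  have := (card_le_card hbad).trans (card_union_le _ _)
  have := card_not_isRun_le ha s ham
  have := card_not_isRun_le hb s hbm
  rw [card_range] at hsplit
  omega

end Runs

lemma List.sublist_range_of_pairwise_lt {P : List ℕ} (hP : P.Pairwise (· < ·)) {n : ℕ}
    (hn : ∀ j ∈ P, j < n) : P <+ List.range n :=
  List.sublist_of_subperm_of_pairwise
    (List.subperm_of_subset hP.nodup fun j hj => List.mem_range.2 (hn j hj))
    (hP.imp le_of_lt) (List.pairwise_lt_range.imp le_of_lt)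

lemma List.Sublist.sum_map_le_add {ι : Type*} {S l : List ι} (h : S <+ l) {g : ι → ℕ} {B : ℕ}
    (hg : ∀ i ∈ l, g i ≤ B) : (l.map g).sum ≤ (S.map g).sum + B * (l.length - S.length) := by
  induction h with
  | slnil => simp
  | cons i h ih =>
    have := ih fun j hj => hg j (List.mem_cons_of_mem i hj)
    have := hg i List.mem_cons_self
    have := h.length_le
    simp only [List.map_cons, List.sum_cons, List.length_cons]
    rw [Nat.sub_add_comm h.length_le, Nat.mul_succ]
    omega
  | cons_cons i _ ih =>
    have := ih fun j hj => hg j (List.mem_cons_of_mem i hj)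
    simp only [List.map_cons, List.sum_cons, List.length_cons, Nat.add_sub_add_right]
    omega

section DillMap

variable {A : Type*} {s : ℕ} (f : (Fin s → A) → List A)

lemma length_le_normMax [Finite A] (u : Fin s → A) : (f u).length ≤ normMax f :=
  le_csSup (Set.finite_range fun u => (f u).length).bddAbove ⟨u, rfl⟩

lemma normMin_le_length (u : Fin s → A) : normMin f ≤ (f u).length :=
  Nat.sInf_le ⟨u, rfl⟩

lemma normMin_pos [Nonempty A] (hf : ∀ u, f u ≠ []) : 0 < normMin f := by
  obtain ⟨u, hu⟩ := Nat.sInf_mem (s := {n | ∃ u : Fin s → A, (f u).length = n})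
    ⟨_, Classical.arbitrary _, rfl⟩
  rw [normMin, ← hu]
  exact List.length_pos_iff.2 (hf u)

lemma cocycle_succ (x : ℕ → A) (n : ℕ) :
    cocycle f x (n + 1) = cocycle f x n + (f (window x n s)).length :=
  Finset.sum_range_succ _ _

lemma cocycle_mono (x : ℕ → A) : Monotone (cocycle f x) := fun _ _ h =>
  Finset.sum_le_sum_of_subset (Finset.range_subset_range.2 h)

lemma normMin_mul_le_cocycle (x : ℕ → A) (n : ℕ) : normMin f * n ≤ cocycle f x n := by
  simpa [cocycle, mul_comm] using
    Finset.card_nsmul_le_sum (Finset.range n) _ _ fun j _ => normMin_le_length f (window x j s)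

lemma cocycle_le_normMax_mul [Finite A] (x : ℕ → A) (n : ℕ) : cocycle f x n ≤ normMax f * n := by
  simpa [cocycle, mul_comm] using
    Finset.sum_le_card_nsmul (Finset.range n) _ _ fun j _ => length_le_normMax f (window x j s)

variable {f} {F : (ℕ → A) → ℕ → A}

lemma factor_cocycle (hF : IsDillVia f F) (x : ℕ → A) (n : ℕ) :
    factor (F x) 0 (cocycle f x n) = ((List.range n).map fun j => f (window x j s)).flatten := by
  induction n with
  | zero => simp [cocycle, factor]
  | succ n ih =>
    rw [cocycle_succ, factor_add, ih, List.range_succ, List.map_append, List.flatten_append]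
    congr 1
    refine List.ext_getElem (by simp) fun k hk _ => ?_
    simpa [factor] using hF x n k (by simpa using hk)

end DillMap

section Blocks

variable {A : Type*} {s : ℕ} {f : (Fin s → A) → List A}

variable (f) in
/-- The number of blocks `f(x_[j, j+s))` of the image of `x` that fit into its prefix of
length `L`. -/
def blockCount (x : ℕ → A) (L : ℕ) : ℕ := Nat.findGreatest (fun n => cocycle f x n ≤ L) L

lemma cocycle_blockCount_le (x : ℕ → A) (L : ℕ) : cocycle f x (blockCount f x L) ≤ L :=
  Nat.findGreatest_spec (P := fun n => cocycle f x n ≤ L) (Nat.zero_le L) (by simp [cocycle])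

lemma le_cocycle (hf : ∀ u, f u ≠ []) (x : ℕ → A) (n : ℕ) : n ≤ cocycle f x n := by
  simpa [cocycle] using
    Finset.card_nsmul_le_sum (Finset.range n) (fun j => (f (window x j s)).length) 1
      fun j _ => List.length_pos_iff.2 (hf _)

lemma lt_cocycle_blockCount_succ (hf : ∀ u, f u ≠ []) (x : ℕ → A) (L : ℕ) :
    L < cocycle f x (blockCount f x L + 1) := by
  by_contra! h
  have := le_cocycle hf x (blockCount f x L + 1)
  exact Nat.findGreatest_is_greatest (P := fun n => cocycle f x n ≤ L)
    (k := blockCount f x L + 1) (Nat.lt_succ_self _) (by omega) h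

lemma normMin_mul_blockCount_le (x : ℕ → A) (L : ℕ) : normMin f * blockCount f x L ≤ L :=
  (normMin_mul_le_cocycle f x _).trans (cocycle_blockCount_le x L)

lemma tendsto_blockCount [Finite A] (hf : ∀ u, f u ≠ []) (x : ℕ → A) :
    Tendsto (blockCount f x) atTop atTop := by
  refine tendsto_atTop.2 fun C => (eventually_ge_atTop (normMax f * C)).mono fun L hL => ?_
  by_contra! h
  have := (lt_cocycle_blockCount_succ hf x L).trans_le (cocycle_le_normMax_mul f x _)
  have := Nat.mul_le_mul_left (normMax f) (show blockCount f x L + 1 ≤ C by omega)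
  omega

lemma cocycle_le_sum_add [Finite A] {z : ℕ → A} {P : List ℕ} {n : ℕ} (hP : P <+ List.range n) :
    cocycle f z n ≤
      (P.map fun j => (f (window z j s)).length).sum + normMax f * (n - P.length) := by
  have hcoc : cocycle f z n = ((List.range n).map fun j => (f (window z j s)).length).sum := by
    simp only [cocycle, Finset.sum, Finset.range_val, Multiset.range, Multiset.map_coe,
      Multiset.sum_coe]
  simpa [hcoc] using hP.sum_map_le_add fun j _ => length_le_normMax f (window z j s)

variable {F : (ℕ → A) → ℕ → A}

lemma flatten_sublist_factor (hF : IsDillVia f F) {z : ℕ → A} {P : List ℕ} {n L : ℕ}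
    (hP : P <+ List.range n) (hn : cocycle f z n ≤ L) :
    (P.map fun j => f (window z j s)).flatten <+ factor (F z) 0 L := by
  have h := (hP.map fun j => f (window z j s)).flatten
  rw [← factor_cocycle hF] at h
  exact h.trans (factor_sublist_factor hn)

/-- The blocks at the positions `P.map a` form a common subsequence, and each of the at most
`m + 1 - |P|` other blocks covering `(F x)_[0, L)` has length at most `‖f‖_max`. -/
lemma le_lcs_add_of_window_eq [Finite A] (hF : IsDillVia f F) {x y : ℕ → A} {m L : ℕ}
    {P : List ℕ} {a b : ℕ → ℕ} (ha : P.map a <+ List.range m) (hb : P.map b <+ List.range m)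
    (hwin : ∀ t ∈ P, window x (a t) s = window y (b t) s)
    (hx : cocycle f x m ≤ L) (hy : cocycle f y m ≤ L) (hL : L ≤ cocycle f x (m + 1)) :
    L ≤ lcs (factor (F x) 0 L) (factor (F y) 0 L) + normMax f * (m + 1 - P.length) := by
  set W := ((P.map a).map fun j => f (window x j s)).flatten
  have hWy : W = ((P.map b).map fun j => f (window y j s)).flatten := by
    simp only [W, List.map_map]
    exact congrArg List.flatten (List.map_congr_left fun t ht => congrArg f (hwin t ht))
  have hlcs : W.length ≤ lcs (factor (F x) 0 L) (factor (F y) 0 L) :=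
    length_le_lcs (flatten_sublist_factor hF ha hx) (hWy ▸ flatten_sublist_factor hF hb hy)
  have hcover := cocycle_le_sum_add (f := f) (z := x)
    (ha.trans (List.range_sublist.2 (by omega : m ≤ m + 1)))
  simp only [List.length_map, List.map_map] at hcover
  have hW : W.length = ((P.map a).map fun j => (f (window x j s)).length).sum := by
    simp [W, List.length_flatten, Function.comp_def]
  simp only [List.map_map] at hW
  omega

end Blocks

lemma limsup_le_mul_limsup_of_eventually_le {g h : ℕ → ℝ} {φ : ℕ → ℕ} {C c : ℝ} (hC : 0 ≤ C)
    (hφ : Tendsto φ atTop atTop) (hg : IsBoundedUnder (· ≤ ·) atTop g)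
    (hh : IsCoboundedUnder (· ≤ ·) atTop h)
    (hle : ∀ᶠ L in atTop, h L ≤ C * g (φ L) + c / φ L) :
    limsup h atTop ≤ C * limsup g atTop := by
  refine le_of_forall_pos_le_add fun ε hε => limsup_le_of_le hh ?_
  set δ := ε / (2 * (C + 1))
  have hCδ : C * δ ≤ ε / 2 := by
    have : (C + 1) * δ = ε / 2 := by simp only [δ]; field_simp
    nlinarith [show 0 < δ by positivity]
  have hgφ : ∀ᶠ L in atTop, g (φ L) ≤ limsup g atTop + δ :=
    hφ.eventually ((eventually_lt_of_limsup_lt (by simp [δ]; positivity) hg).mono fun _ => le_of_lt)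
  have hc : ∀ᶠ L in atTop, c / φ L ≤ ε / 2 :=
    ((tendsto_const_div_atTop_nhds_zero_nat c).comp hφ).eventually_le_const (half_pos hε)
  filter_upwards [hle, hgφ, hc] with L h1 h2 h3
  nlinarith [mul_le_mul_of_nonneg_left h2 hC]

section Lipschitz

variable {A : Type*} {s : ℕ} {f : (Fin s → A) → List A} {F : (ℕ → A) → ℕ → A}

lemma le_lcs_add_of_cocycle_le [Finite A] (hs : 1 ≤ s) (hF : IsDillVia f F) {x y : ℕ → A}
    {m L : ℕ} (hx : cocycle f x m ≤ L) (hy : cocycle f y m ≤ L) (hL : L ≤ cocycle f x (m + 1)) :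
    L ≤ lcs (factor (F x) 0 L) (factor (F y) 0 L) +
      normMax f * (s + (2 * s - 1) * (m - lcs (factor x 0 m) (factor y 0 m))) := by
  set ℓ := lcs (factor x 0 m) (factor y 0 m)
  obtain ⟨a, b, hab⟩ := exists_orderEmbedding_lcs_factor x y m
  set runs := {t ∈ Finset.range (ℓ + 1 - s) | IsRun a t s ∧ IsRun b t s}
  have hcard : ℓ + 1 - s ≤ runs.card + 2 * ((s - 1) * (m - ℓ)) :=
    le_card_filter_isRun_and_add a.strictMono b.strictMono s (fun i hi => (hab i hi).1)
      (fun i hi => (hab i hi).2.1)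
  set P := runs.sort (· ≤ ·)
  have hP : ∀ t ∈ P, t < ℓ + 1 - s ∧ IsRun a t s ∧ IsRun b t s := fun t ht => by
    simpa [runs, P] using ht
  have hsub (c : ℕ ↪o ℕ) (hc : ∀ i < ℓ, c i < m) : P.map c <+ List.range m := by
    refine List.sublist_range_of_pairwise_lt
      ((Finset.sortedLT_sort runs).pairwise.map _ fun _ _ h => c.strictMono h) ?_
    simp only [List.mem_map]
    rintro _ ⟨t, ht, rfl⟩
    exact hc t (by have := (hP t ht).1; omega)
  have hwin (t : ℕ) (ht : t ∈ P) : window x (a t) s = window y (b t) s := by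
    obtain ⟨htℓ, hta, htb⟩ := hP t ht
    funext r
    simp only [window]
    rw [← hta r r.isLt, ← htb r r.isLt]
    exact (hab _ (by omega)).2.2
  have hlen : P.length = runs.card := Finset.length_sort _
  have hexpand : (2 * s - 1) * (m - ℓ) = 2 * ((s - 1) * (m - ℓ)) + (m - ℓ) := by
    obtain ⟨s', rfl⟩ := Nat.exists_eq_add_of_le' hs
    rw [show 2 * (s' + 1) - 1 = 2 * s' + 1 by omega, Nat.add_sub_cancel]
    ring
  calc L ≤ lcs (factor (F x) 0 L) (factor (F y) 0 L) + normMax f * (m + 1 - P.length) :=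
        le_lcs_add_of_window_eq hF (hsub a fun i hi => (hab i hi).1)
          (hsub b fun i hi => (hab i hi).2.1) hwin hx hy hL
    _ ≤ _ := Nat.add_le_add_left (Nat.mul_le_mul_left _ (by omega)) _

lemma levD_factor_le_of_cocycle_le [Finite A] (hs : 1 ≤ s) (hF : IsDillVia f F)
    {x y : ℕ → A} {m L : ℕ} (hx : cocycle f x m ≤ L) (hy : cocycle f y m ≤ L)
    (hL : L ≤ cocycle f x (m + 1)) :
    levD (factor (F x) 0 L) (factor (F y) 0 L) ≤
      normMax f * (s + (2 * s - 1) * levD (factor x 0 m) (factor y 0 m)) := by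
  have key := le_lcs_add_of_cocycle_le hs hF hx hy hL
  rw [← Nat.cast_le (α := ℝ)] at key
  push_cast [Nat.cast_sub (lcs_factor_le x y m), Nat.cast_sub (by omega : 1 ≤ 2 * s)] at key
  rw [levD_factor, levD_factor]
  linarith

lemma levD_factor_le_of_blockCount [Finite A] (hs : 1 ≤ s) (hf : ∀ u, f u ≠ [])
    (hF : IsDillVia f F) (x y : ℕ → A) (L : ℕ) :
    levD (factor (F x) 0 L) (factor (F y) 0 L) ≤ normMax f * (s + (2 * s - 1) *
      levD (factor x 0 (min (blockCount f x L) (blockCount f y L)))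
        (factor y 0 (min (blockCount f x L) (blockCount f y L)))) := by
  rcases le_total (blockCount f x L) (blockCount f y L) with h | h
  · rw [min_eq_left h]
    exact levD_factor_le_of_cocycle_le hs hF (cocycle_blockCount_le x L)
      ((cocycle_mono f y h).trans (cocycle_blockCount_le y L))
      (lt_cocycle_blockCount_succ hf x L).le
  · rw [min_eq_right h, levD_comm (factor (F x) 0 L), levD_comm (factor x 0 _)]
    exact levD_factor_le_of_cocycle_le hs hF (cocycle_blockCount_le y L)
      ((cocycle_mono f x h).trans (cocycle_blockCount_le x L))
      (lt_cocycle_blockCount_succ hf y L).le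

theorem feld_le_of_isDillVia [Finite A] [Nonempty A] (hs : 1 ≤ s) (hf : ∀ u, f u ≠ [])
    (hF : IsDillVia f F) (x y : ℕ → A) :
    feld (F x) (F y) ≤ (2 * (s : ℝ) - 1) * ((normMax f : ℝ) / (normMin f : ℝ)) * feld x y := by
  have hmin : (0 : ℝ) < normMin f := by exact_mod_cast normMin_pos f hf
  have hs' : (1 : ℝ) ≤ s := by exact_mod_cast hs
  set φ := fun L => min (blockCount f x L) (blockCount f y L)
  have hφ : Tendsto φ atTop atTop :=
    tendsto_inf_atTop _ (tendsto_blockCount hf x) (tendsto_blockCount hf y)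
  refine limsup_le_mul_limsup_of_eventually_le (c := normMax f * s / normMin f) (φ := φ)
    (mul_nonneg (by linarith) (by positivity)) hφ
    (isBoundedUnder_of ⟨1, levD_factor_div_le_one x y⟩)
    (isCoboundedUnder_le_of_le atTop fun L => div_nonneg (levD_factor_nonneg _ _ L) L.cast_nonneg)
    ?_
  filter_upwards [hφ.eventually_ge_atTop 1] with L hL
  have hM : (0 : ℝ) < φ L := by exact_mod_cast hL
  have hML : (normMin f : ℝ) * φ L ≤ L := by
    exact_mod_cast (Nat.mul_le_mul_left _ (min_le_left _ _)).trans (normMin_mul_blockCount_le x L)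
  calc levD (factor (F x) 0 L) (factor (F y) 0 L) / L
      ≤ levD (factor (F x) 0 L) (factor (F y) 0 L) / (normMin f * φ L) :=
        div_le_div_of_nonneg_left (levD_factor_nonneg _ _ L) (by positivity) hML
    _ ≤ normMax f * (s + (2 * s - 1) * levD (factor x 0 (φ L)) (factor y 0 (φ L))) /
          (normMin f * φ L) :=
        div_le_div_of_nonneg_right (levD_factor_le_of_blockCount hs hf hF x y L) (by positivity)
    _ = _ := by field_simp; ring

end Lipschitz

section Substitution

variable {A : Type*}

lemma natCast_sSup_range {ι : Type*} [Finite ι] [Nonempty ι] (g : ι → ℕ) :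
    ((sSup (Set.range g) : ℕ) : ℝ) = sSup (Set.range fun i => (g i : ℝ)) :=
  Nat.mono_cast.map_ciSup_of_continuousAt continuous_of_discreteTopology.continuousAt
    (Set.finite_range g).bddAbove

lemma natCast_sInf_range {ι : Type*} [Finite ι] [Nonempty ι] (g : ι → ℕ) :
    ((sInf (Set.range g) : ℕ) : ℝ) = sInf (Set.range fun i => (g i : ℝ)) :=
  Nat.mono_cast.map_ciInf_of_continuousAt continuous_of_discreteTopology.continuousAt
    (Set.finite_range g).bddBelow

lemma range_length_comp_eval_zero (τ : A → List A) :
    Set.range (fun u : Fin 1 → A => (τ (u 0)).length) = Set.range fun a => (τ a).length :=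
  Set.ext fun _ => ⟨fun ⟨u, hu⟩ => ⟨u 0, hu⟩, fun ⟨a, ha⟩ => ⟨fun _ => a, ha⟩⟩

lemma normMax_comp_eval_zero (τ : A → List A) :
    normMax (fun u : Fin 1 → A => τ (u 0)) = sSup (Set.range fun a => (τ a).length) :=
  congrArg sSup (range_length_comp_eval_zero τ)

lemma normMin_comp_eval_zero (τ : A → List A) :
    normMin (fun u : Fin 1 → A => τ (u 0)) = sInf (Set.range fun a => (τ a).length) :=
  congrArg sInf (range_length_comp_eval_zero τ)

end Substitution

/-- Every dill map with diameter `s` and local rule `f` is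
`(2s-1)·(‖f‖_max/‖f‖_min)`-Lipschitz for the Feldman pseudometric; in particular every
substitution `τ` (via its induced map `G = τ̄`) is `(‖τ‖_max/‖τ‖_min)`-Lipschitz. -/
theorem dill_feld_lipschitz {A : Type*} [Fintype A] [Nonempty A] (s : ℕ) (hs : 1 ≤ s)
    (f : (Fin s → A) → List A) (hf : ∀ u, f u ≠ [])
    (F : (ℕ → A) → ℕ → A) (hF : IsDillVia f F) :
    (∀ x y : ℕ → A,
      feld (F x) (F y) ≤ (2 * (s : ℝ) - 1) * ((normMax f : ℝ) / (normMin f : ℝ)) * feld x y) ∧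
    (∀ (τ : A → List A), (∀ a, τ a ≠ []) →
      ∀ G : (ℕ → A) → ℕ → A,
        (∀ (z : ℕ → A) (n k : ℕ) (h : k < (τ (z n)).length),
          G z (subCocycle τ z n + k) = (τ (z n)).get ⟨k, h⟩) →
        ∀ x y : ℕ → A,
          feld (G x) (G y) ≤
            ((sSup {n | ∃ a : A, (τ a).length = n} : ℝ) /
              (sInf {n | ∃ a : A, (τ a).length = n} : ℝ)) * feld x y) := by
  refine ⟨feld_le_of_isDillVia hs hf hF, fun τ hτ G hG x y => ?_⟩
  have hG' : IsDillVia (fun u : Fin 1 → A => τ (u 0)) G := hG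
  have h := feld_le_of_isDillVia le_rfl (fun u => hτ (u 0)) hG' x y
  rw [normMax_comp_eval_zero, normMin_comp_eval_zero, natCast_sSup_range, natCast_sInf_range] at h
  norm_num at h
  exact h
end
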